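/- Let p, q be reals with p > 1 and q > 1, let n be a natural number, and on ℝ^{n+1} with standard basis e_0, …, e_n define the raising operator A by A·e_k = √([n−k]_{p,q}·[k+1]_{p,q})·e_{k+1} for k < n and A·e_n = 0. Then for every integer j with 0 ≤ j ≤ n, A^j·e_0 = √([j]_{p,q}! · [n]_{p,q}! / [n−j]_{p,q}!)·e_j. (This is the rule inverse to (3.11), generating the Gel'fand–Zetlin basis from the lowest weight vector by powers of the raising generator E_{12}, used in computing the matrix elements of E_{32}.) -/
import Mathlib


/-- The two-parameter bracket `[x]_{p,q} = (q^x - p^(-x))/(q - p⁻¹)`. -/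
noncomputable def pqBracket (p q : ℝ) (x : ℤ) : ℝ := (q ^ x - p ^ (-x)) / (q - p⁻¹)

/-- The bracket factorial `[n]_{p,q}! = [1]_{p,q}·[2]_{p,q}⋯[n]_{p,q}`, with `[0]_{p,q}! = 1`. -/
noncomputable def pqFactorial (p q : ℝ) : ℕ → ℝ
  | 0 => 1
  | k + 1 => pqFactorial p q k * pqBracket p q ((k : ℤ) + 1)

/-- The standard basis vector `e_k` of `ℝ^{n+1}`. -/
def stdVec (n : ℕ) (k : Fin (n + 1)) : Fin (n + 1) → ℝ := Pi.single k 1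

lemma pqBracket_pos {p q : ℝ} (hp : 1 < p) (hq : 1 < q) {x : ℤ} (hx : 0 < x) :
    0 < pqBracket p q x := by
  have hp0 : 0 < p := lt_trans one_pos hp
  have h1 : (1 : ℝ) < q ^ x := one_lt_zpow₀ hq hx
  have h2 : p ^ (-x) < 1 := by
    rw [zpow_neg]
    exact inv_lt_one_of_one_lt₀ (one_lt_zpow₀ hp hx)
  have h3 : p⁻¹ < q := lt_trans (inv_lt_one_of_one_lt₀ hp) hq
  exact div_pos (by linarith) (by linarith)

lemma pqFactorial_pos {p q : ℝ} (hp : 1 < p) (hq : 1 < q) (m : ℕ) :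
    0 < pqFactorial p q m := by
  induction m with
  | zero => norm_num [pqFactorial]
  | succ k ih =>
    exact mul_pos ih (pqBracket_pos hp hq (by positivity))

/-- The rule inverse to (3.11): normalized powers of the raising generator applied to the
lowest weight vector `e_0` generate the Gel'fand–Zetlin basis. -/
theorem raising_powers_of_lowest_weight_vector (p q : ℝ) (hp : 1 < p) (hq : 1 < q) (n : ℕ)
    (A : Module.End ℝ (Fin (n + 1) → ℝ))
    (hA : ∀ k : Fin (n + 1),
      A (stdVec n k) =
        if h : (k : ℕ) < n then
          Real.sqrt (pqBracket p q ((n : ℤ) - ((k : ℕ) : ℤ)) *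
              pqBracket p q (((k : ℕ) : ℤ) + 1)) •
            stdVec n (⟨(k : ℕ) + 1, by omega⟩ : Fin (n + 1))
        else 0) :
    ∀ j : ℕ, ∀ hj : j ≤ n,
      (A ^ j) (stdVec n (⟨0, by omega⟩ : Fin (n + 1))) =
        Real.sqrt (pqFactorial p q j * pqFactorial p q n / pqFactorial p q (n - j)) •
          stdVec n (⟨j, by omega⟩ : Fin (n + 1)) := by
  intro j
  induction j with
  | zero =>
    intro hj
    simp [pqFactorial, div_self (ne_of_gt (pqFactorial_pos hp hq n))]
  | succ j ih =>
    intro hj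
    have hjn : j ≤ n := by omega
    have hjlt : j < n := by omega
    rw [pow_succ', Module.End.mul_apply, ih hjn, map_smul, hA]
    simp only [dif_pos hjlt]
    rw [smul_smul]
    congr 1
    have hFj := pqFactorial_pos hp hq j
    have hFn := pqFactorial_pos hp hq n
    have hFnj := pqFactorial_pos hp hq (n - j)
    have hB1 : 0 < pqBracket p q ((n : ℤ) - (j : ℤ)) :=
      pqBracket_pos hp hq (by omega)
    have hB2 : 0 < pqBracket p q ((j : ℤ) + 1) :=
      pqBracket_pos hp hq (by positivity)
    rw [← Real.sqrt_mul (by positivity)]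
    congr 1
    have hFsucc : pqFactorial p q (j + 1) = pqFactorial p q j * pqBracket p q ((j : ℤ) + 1) := rfl
    have hkey : pqFactorial p q (n - j) =
        pqFactorial p q (n - (j + 1)) * pqBracket p q ((n : ℤ) - (j : ℤ)) := by
      have h1 : n - j = (n - (j + 1)) + 1 := by omega
      rw [h1]
      have h2 : ((n - (j + 1) : ℕ) : ℤ) + 1 = (n : ℤ) - (j : ℤ) := by omega
      rw [pqFactorial, h2]
    rw [hFsucc, hkey]
    have hFnj1 := pqFactorial_pos hp hq (n - (j + 1))
    field_simp
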